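/- arXiv:2508.11516 — 4 statements merged into one kernel-verified Lean document; each statement's English description precedes it below -/
import Mathlib

section
/- Let n_1,…,n_c be nonnegative reals with Σ_o n_o = m > 0, and let λ > 0. Let D be the c×c diagonal matrix with D_{oo} = 1 + λ n_o. Fix vectors u, w ∈ ℝ^c and suppose there is an index k such that u^{(k)} w^{(k)} ≥ ‖u‖₂‖w‖₂ / √(1 + ((2n_k + λ n_k²)/(Σ_{l≠k}(2n_l + λ n_l²)))²), where Σ_{l≠k}(2n_l + λ n_l²) > 0. Then (Du)ᵀ(Dw) ≥ uᵀw. -/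
set_option maxHeartbeats 1000000
open Matrix

/-- Under the coordinate-dominance condition at index k, applying the diagonal matrix
`D = diag(1 + λ nₒ)` does not decrease the inner product: (Du)ᵀ(Dw) ≥ uᵀw. -/
theorem diag_update_inner_ge (c : ℕ) (nv : Fin c → ℝ) (m lam : ℝ)
    (hnv : ∀ o, 0 ≤ nv o) (hsum : ∑ o, nv o = m) (hm : 0 < m) (hlam : 0 < lam)
    (u w : Fin c → ℝ) (k : Fin c)
    (hden : 0 < ∑ l ∈ Finset.univ.erase k, (2 * nv l + lam * (nv l) ^ 2))
    (hk : u k * w k ≥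
      Real.sqrt (∑ o, (u o) ^ 2) * Real.sqrt (∑ o, (w o) ^ 2) /
        Real.sqrt (1 + ((2 * nv k + lam * (nv k) ^ 2) /
          (∑ l ∈ Finset.univ.erase k, (2 * nv l + lam * (nv l) ^ 2))) ^ 2)) :
    (Matrix.diagonal (fun o => 1 + lam * nv o)).mulVec u ⬝ᵥ
        (Matrix.diagonal (fun o => 1 + lam * nv o)).mulVec w
      ≥ u ⬝ᵥ w := by
  classical
  have hmv : ∀ (x : Fin c → ℝ), (Matrix.diagonal (fun o => 1 + lam * nv o)).mulVec x
      = fun o => (1 + lam * nv o) * x o := by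
    intro x; funext o; simp [Matrix.mulVec_diagonal]
  rw [hmv, hmv]
  simp only [dotProduct]
  set b : Fin c → ℝ := fun o => 2 * nv o + lam * (nv o) ^ 2 with hbdef
  have hbnn : ∀ o, 0 ≤ b o := by
    intro o; have := hnv o; simp only [hbdef]; positivity
  set S : ℝ := ∑ l ∈ Finset.univ.erase k, b l with hSdef
  have hS : 0 < S := hden
  set U : ℝ := Real.sqrt (∑ o, u o ^ 2) with hUdef
  set W : ℝ := Real.sqrt (∑ o, w o ^ 2) with hWdef
  set A : ℝ := Real.sqrt (∑ l ∈ Finset.univ.erase k, u l ^ 2) with hAdef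
  set B : ℝ := Real.sqrt (∑ l ∈ Finset.univ.erase k, w l ^ 2) with hBdef
  have hk' : u k * w k ≥ U * W / Real.sqrt (1 + (b k / S) ^ 2) := by
    simp only [hbdef]; exact hk
  clear_value b S U W A B
  have hUnn : 0 ≤ U := hUdef ▸ Real.sqrt_nonneg _
  have hWnn : 0 ≤ W := hWdef ▸ Real.sqrt_nonneg _
  have hAnn : 0 ≤ A := hAdef ▸ Real.sqrt_nonneg _
  have hBnn : 0 ≤ B := hBdef ▸ Real.sqrt_nonneg _
  have hU2 : U ^ 2 = u k ^ 2 + A ^ 2 := by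
    rw [hUdef, hAdef, Real.sq_sqrt (by positivity), Real.sq_sqrt (by positivity),
      ← Finset.add_sum_erase _ _ (Finset.mem_univ k)]
  have hW2 : W ^ 2 = w k ^ 2 + B ^ 2 := by
    rw [hWdef, hBdef, Real.sq_sqrt (by positivity), Real.sq_sqrt (by positivity),
      ← Finset.add_sum_erase _ _ (Finset.mem_univ k)]
  -- bound on off-diagonal terms
  have hoff : ∀ o ∈ Finset.univ.erase k, -(b o * (A * B)) ≤ b o * (u o * w o) := by
    intro o ho
    have hu : u o ^ 2 ≤ A ^ 2 := by
      rw [hAdef, Real.sq_sqrt (by positivity)]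
      exact Finset.single_le_sum (fun i _ => sq_nonneg (u i)) ho
    have hw : w o ^ 2 ≤ B ^ 2 := by
      rw [hBdef, Real.sq_sqrt (by positivity)]
      exact Finset.single_le_sum (fun i _ => sq_nonneg (w i)) ho
    have h1 : -(A * B) ≤ u o * w o := by
      nlinarith [mul_nonneg hAnn hBnn, sq_nonneg (u o * B + w o * A),
        sq_nonneg (A * B + u o * w o), mul_le_mul hu hw (sq_nonneg (w o)) (sq_nonneg A)]
    have := hbnn o
    nlinarith
  have hsum_off : -(S * (A * B)) ≤ ∑ o ∈ Finset.univ.erase k, b o * (u o * w o) := by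
    have := Finset.sum_le_sum hoff
    calc -(S * (A * B)) = ∑ o ∈ Finset.univ.erase k, -(b o * (A * B)) := by
          rw [Finset.sum_neg_distrib, ← Finset.sum_mul, ← hSdef]
      _ ≤ _ := this
  -- key : (S + b k) * (u k * w k) ≥ S * (U * W)
  have hbk := hbnn k
  have hsqrt_le : Real.sqrt (1 + (b k / S) ^ 2) ≤ (S + b k) / S := by
    have h1 : 1 + (b k / S) ^ 2 ≤ ((S + b k) / S) ^ 2 := by
      have h0 : 0 ≤ 2 * b k / S := by positivity
      have heq : ((S + b k) / S) ^ 2 = 1 + (b k / S) ^ 2 + 2 * b k / S := by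
        field_simp; ring
      linarith
    calc Real.sqrt (1 + (b k / S) ^ 2) ≤ Real.sqrt (((S + b k) / S) ^ 2) :=
          Real.sqrt_le_sqrt h1
      _ = (S + b k) / S := Real.sqrt_sq (by positivity)
  have hsqrt_pos : 0 < Real.sqrt (1 + (b k / S) ^ 2) := by
    apply Real.sqrt_pos.mpr
    have := sq_nonneg (b k / S)
    linarith
  have h2 : U * W / ((S + b k) / S) ≤ u k * w k := by
    refine le_trans ?_ hk'
    apply div_le_div_of_nonneg_left (mul_nonneg hUnn hWnn) hsqrt_pos hsqrt_le
  have hSb : 0 < S + b k := by linarith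
  have hkey : S * (U * W) ≤ (S + b k) * (u k * w k) := by
    rw [div_div_eq_mul_div, div_le_iff₀ hSb] at h2
    nlinarith [h2]
  -- A*B ≤ U*W - u k * w k
  have hub : u k ^ 2 ≤ U ^ 2 := by nlinarith [sq_nonneg A]
  have hwb : w k ^ 2 ≤ W ^ 2 := by nlinarith [sq_nonneg B]
  have hUW : u k * w k ≤ U * W := by
    nlinarith [mul_nonneg hUnn hWnn, sq_nonneg (U * W + u k * w k),
      mul_le_mul hub hwb (sq_nonneg (w k)) (sq_nonneg U)]
  have hcross : A * B ≤ U * W - u k * w k := by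
    nlinarith [sq_nonneg (U * w k - W * u k), mul_nonneg hAnn hBnn,
      sq_nonneg (A * B + (U * W - u k * w k))]
  -- conclude
  have hkmain : S * (A * B) ≤ b k * (u k * w k) := by
    have h3 : S * (A * B) ≤ S * (U * W - u k * w k) :=
      mul_le_mul_of_nonneg_left hcross hS.le
    nlinarith [hkey, h3]
  have hmain : 0 ≤ ∑ o, b o * (u o * w o) := by
    rw [← Finset.add_sum_erase _ _ (Finset.mem_univ k)]
    linarith [hsum_off, hkmain]
  have hsplit : ∀ o : Fin c, (1 + lam * nv o) * u o * ((1 + lam * nv o) * w o)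
      = u o * w o + lam * (b o * (u o * w o)) := by
    intro o; simp only [hbdef]; ring
  calc (∑ o, u o * w o) ≤ (∑ o, u o * w o) + lam * ∑ o, b o * (u o * w o) := by
        nlinarith [hmain]
    _ = ∑ o, (1 + lam * nv o) * u o * ((1 + lam * nv o) * w o) := by
        rw [Finset.mul_sum, ← Finset.sum_add_distrib]
        exact Finset.sum_congr rfl fun o _ => (hsplit o).symm
end

section
/- Let n_1,…,n_c be positive reals with λ > 0 and k = argmax_o n_o, and let D = diag(1+λn_1,…,1+λn_c). If u, w ∈ ℝ^c satisfy u^{(k)} w^{(k)} ≥ ‖u‖₂‖w‖₂ / √(1 + ((2n_k + λ n_k²)/(Σ_{l≠k}(2n_l + λ n_l²)))²), then for every positive integer τ, (D^τ u)ᵀ(D^τ w) ≥ (D^{τ−1} u)ᵀ(D^{τ−1} w); i.e., the inner product is monotonically nondecreasing along repeated applications of D. -/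
open Matrix




lemma aux_sum_mono (c : ℕ) (d A u w : Fin c → ℝ) (k : Fin c) (lam : ℝ) (hlam : 0 ≤ lam)
    (hd0 : ∀ o, 0 ≤ d o) (hdk : ∀ o, d o ≤ d k)
    (hApos : ∀ o, 0 ≤ A o)
    (hdA : ∀ o, d o ^ 2 = 1 + lam * A o)
    (hmain : (∑ l ∈ Finset.univ.erase k, A l) *
        (Real.sqrt (∑ l ∈ Finset.univ.erase k, (u l) ^ 2) *
          Real.sqrt (∑ l ∈ Finset.univ.erase k, (w l) ^ 2)) ≤ A k * (u k * w k))
    (m : ℕ) :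
    ∑ i, d i ^ m * u i * (d i ^ m * w i) ≤ ∑ i, d i ^ (m+1) * u i * (d i ^ (m+1) * w i) := by
  rw [← sub_nonneg, ← Finset.sum_sub_distrib]
  have hterm : ∀ i, d i ^ (m+1) * u i * (d i ^ (m+1) * w i) - d i ^ m * u i * (d i ^ m * w i)
      = lam * A i * ((d i ^ m) ^ 2 * (u i * w i)) := by
    intro i
    have h2 := hdA i
    have : d i ^ (m+1) * u i * (d i ^ (m+1) * w i) - d i ^ m * u i * (d i ^ m * w i)
        = (d i ^ 2 - 1) * ((d i ^ m) ^ 2 * (u i * w i)) := by ring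
    rw [this, h2]; ring
  simp only [hterm]
  set ck := Real.sqrt (∑ l ∈ Finset.univ.erase k, (u l) ^ 2) with hck
  set dk := Real.sqrt (∑ l ∈ Finset.univ.erase k, (w l) ^ 2) with hdkk
  have hcknn : 0 ≤ ck := Real.sqrt_nonneg _
  have hdknn : 0 ≤ dk := Real.sqrt_nonneg _
  have habs : ∀ o ∈ Finset.univ.erase k, |u o * w o| ≤ ck * dk := by
    intro o ho
    have h1 : |u o| ≤ ck := by
      rw [hck, ← Real.sqrt_sq_eq_abs]
      exact Real.sqrt_le_sqrt (Finset.single_le_sum (fun l _ => sq_nonneg (u l)) ho)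
    have h2 : |w o| ≤ dk := by
      rw [hdkk, ← Real.sqrt_sq_eq_abs]
      exact Real.sqrt_le_sqrt (Finset.single_le_sum (fun l _ => sq_nonneg (w l)) ho)
    rw [abs_mul]
    exact mul_le_mul h1 h2 (abs_nonneg _) hcknn
  have hemon : ∀ o, (d o ^ m) ^ 2 ≤ (d k ^ m) ^ 2 := by
    intro o
    have := pow_le_pow_left₀ (hd0 o) (hdk o) m
    exact pow_le_pow_left₀ (pow_nonneg (hd0 o) m) this 2
  have hekn : 0 ≤ (d k ^ m) ^ 2 := sq_nonneg _
  rw [← Finset.add_sum_erase _ _ (Finset.mem_univ k)]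
  have hbound : ∀ o ∈ Finset.univ.erase k,
      -(lam * ((d k ^ m) ^ 2 * (ck * dk)) * A o) ≤ lam * A o * ((d o ^ m) ^ 2 * (u o * w o)) := by
    intro o ho
    have h1 : -(ck * dk) ≤ u o * w o := by
      have := habs o ho
      have := neg_abs_le (u o * w o)
      linarith
    have h2 : -((d k ^ m) ^ 2 * (ck * dk)) ≤ (d o ^ m) ^ 2 * (u o * w o) := by
      rcases le_or_gt 0 (u o * w o) with h | h
      · have : 0 ≤ (d o ^ m) ^ 2 * (u o * w o) := mul_nonneg (sq_nonneg _) h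
        nlinarith [mul_nonneg hcknn hdknn]
      · nlinarith [hemon o, sq_nonneg (d o ^ m), mul_nonneg hcknn hdknn]
    have := mul_le_mul_of_nonneg_left h2 (mul_nonneg hlam (hApos o))
    nlinarith
  have hsum := Finset.sum_le_sum hbound
  rw [Finset.sum_neg_distrib, ← Finset.mul_sum] at hsum
  have hkterm : lam * ((d k ^ m) ^ 2 * (ck * dk)) * (∑ l ∈ Finset.univ.erase k, A l)
      ≤ lam * A k * ((d k ^ m) ^ 2 * (u k * w k)) := by
    have := mul_le_mul_of_nonneg_left hmain (mul_nonneg hlam hekn)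
    nlinarith
  linarith




lemma aux_key (c : ℕ) (A u w : Fin c → ℝ) (k : Fin c)
    (hAk : 0 < A k) (hSnn : 0 ≤ ∑ l ∈ Finset.univ.erase k, A l)
    (hk : Real.sqrt (∑ o, (u o) ^ 2) * Real.sqrt (∑ o, (w o) ^ 2) /
        Real.sqrt (1 + (A k / (∑ l ∈ Finset.univ.erase k, A l)) ^ 2) ≤ u k * w k) :
    (∑ l ∈ Finset.univ.erase k, A l) *
      (Real.sqrt (∑ l ∈ Finset.univ.erase k, (u l) ^ 2) *
        Real.sqrt (∑ l ∈ Finset.univ.erase k, (w l) ^ 2)) ≤ A k * (u k * w k) := by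
  set S := ∑ l ∈ Finset.univ.erase k, A l with hS
  set P := Real.sqrt (∑ o, (u o) ^ 2) with hP
  set Q := Real.sqrt (∑ o, (w o) ^ 2) with hQ
  set ck := Real.sqrt (∑ l ∈ Finset.univ.erase k, (u l) ^ 2) with hck
  set dk := Real.sqrt (∑ l ∈ Finset.univ.erase k, (w l) ^ 2) with hdk
  have hPnn : 0 ≤ P := Real.sqrt_nonneg _
  have hQnn : 0 ≤ Q := Real.sqrt_nonneg _
  have hcknn : 0 ≤ ck := Real.sqrt_nonneg _
  have hdknn : 0 ≤ dk := Real.sqrt_nonneg _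
  have hP2 : P ^ 2 = u k ^ 2 + ck ^ 2 := by
    rw [hP, hck, Real.sq_sqrt (Finset.sum_nonneg fun l _ => sq_nonneg _),
      Real.sq_sqrt (Finset.sum_nonneg fun l _ => sq_nonneg _),
      ← Finset.add_sum_erase _ _ (Finset.mem_univ k)]
  have hQ2 : Q ^ 2 = w k ^ 2 + dk ^ 2 := by
    rw [hQ, hdk, Real.sq_sqrt (Finset.sum_nonneg fun l _ => sq_nonneg _),
      Real.sq_sqrt (Finset.sum_nonneg fun l _ => sq_nonneg _),
      ← Finset.add_sum_erase _ _ (Finset.mem_univ k)]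
  -- Two-dimensional Cauchy–Schwarz: u k * w k + ck * dk ≤ P * Q
  have hCS : u k * w k + ck * dk ≤ P * Q := by
    have hab : u k * w k ≤ |u k| * |w k| := (le_abs_self _).trans_eq (abs_mul _ _)
    have hXnn : 0 ≤ |u k| * |w k| + ck * dk :=
      add_nonneg (mul_nonneg (abs_nonneg _) (abs_nonneg _)) (mul_nonneg hcknn hdknn)
    have hsq : (|u k| * |w k| + ck * dk) ^ 2 ≤ (P * Q) ^ 2 := by
      nlinarith [sq_nonneg (|u k| * dk - |w k| * ck), sq_abs (u k), sq_abs (w k),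
        mul_nonneg (mul_nonneg (abs_nonneg (u k)) (abs_nonneg (w k))) (mul_nonneg hcknn hdknn)]
    have := Real.sqrt_le_sqrt hsq
    rw [Real.sqrt_sq hXnn, Real.sqrt_sq (mul_nonneg hPnn hQnn)] at this
    linarith
  -- Key1 : S * (P * Q) ≤ u k * w k * (S + A k)
  have hKey1 : S * (P * Q) ≤ u k * w k * (S + A k) := by
    rcases eq_or_lt_of_le hSnn with hS0 | hSpos
    · rw [← hS0] at hk ⊢
      simp only [div_zero, ne_eq, OfNat.ofNat_ne_zero, not_false_eq_true, zero_pow, add_zero,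
        Real.sqrt_one, div_one, zero_mul] at hk ⊢
      nlinarith [mul_nonneg hPnn hQnn]
    · have hSAk : 0 < S + A k := by linarith
      have hden : Real.sqrt (1 + (A k / S) ^ 2) ≤ (S + A k) / S := by
        have h1 : 1 + (A k / S) ^ 2 ≤ ((S + A k) / S) ^ 2 := by
          rw [div_pow, div_pow, le_div_iff₀ (by positivity), add_mul,
            div_mul_cancel₀ _ (by positivity : (S:ℝ) ^ 2 ≠ 0)]
          nlinarith [mul_pos hSpos hAk]
        have := Real.sqrt_le_sqrt h1
        rwa [Real.sqrt_sq (by positivity)] at this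
      have hdenpos : 0 < Real.sqrt (1 + (A k / S) ^ 2) := by positivity
      have h2 : P * Q / ((S + A k) / S) ≤ P * Q / Real.sqrt (1 + (A k / S) ^ 2) :=
        div_le_div_of_nonneg_left (mul_nonneg hPnn hQnn) hdenpos hden
      have h3 : P * Q / ((S + A k) / S) ≤ u k * w k := le_trans h2 hk
      rw [div_div_eq_mul_div, div_le_iff₀ hSAk] at h3
      linarith
  -- conclude
  have hmul := mul_le_mul_of_nonneg_left hCS hSnn
  nlinarith

/-- If k = argmax nₒ and the coordinate-dominance condition holds at k, then the inner
product is monotonically nondecreasing along repeated applications of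
D = diag(1 + λ nₒ). -/
theorem inner_monotone_under_diag_powers (c : ℕ) (nv : Fin c → ℝ) (lam : ℝ)
    (hnv : ∀ o, 0 < nv o) (hlam : 0 < lam)
    (k : Fin c) (hkmax : ∀ o, nv o ≤ nv k)
    (u w : Fin c → ℝ)
    (hk : u k * w k ≥
      Real.sqrt (∑ o, (u o) ^ 2) * Real.sqrt (∑ o, (w o) ^ 2) /
        Real.sqrt (1 + ((2 * nv k + lam * (nv k) ^ 2) /
          (∑ l ∈ Finset.univ.erase k, (2 * nv l + lam * (nv l) ^ 2))) ^ 2)) :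
    ∀ τ : ℕ, 1 ≤ τ →
      ((Matrix.diagonal (fun o => 1 + lam * nv o)) ^ τ).mulVec u ⬝ᵥ
          ((Matrix.diagonal (fun o => 1 + lam * nv o)) ^ τ).mulVec w
        ≥ ((Matrix.diagonal (fun o => 1 + lam * nv o)) ^ (τ - 1)).mulVec u ⬝ᵥ
            ((Matrix.diagonal (fun o => 1 + lam * nv o)) ^ (τ - 1)).mulVec w := by
  intro τ hτ
  obtain ⟨m, rfl⟩ : ∃ m, τ = m + 1 := ⟨τ - 1, (Nat.succ_pred_eq_of_pos hτ).symm⟩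
  rw [ge_iff_le]
  simp only [Nat.add_sub_cancel, diagonal_pow, mulVec_diagonal, dotProduct, Pi.pow_apply]
  have hmain := aux_key c (fun o => 2 * nv o + lam * (nv o) ^ 2) u w k
    (by have := hnv k; positivity)
    (Finset.sum_nonneg fun l _ => by have := hnv l; positivity)
    hk
  exact aux_sum_mono c (fun o => 1 + lam * nv o) (fun o => 2 * nv o + lam * (nv o) ^ 2) u w k
    lam hlam.le
    (fun o => by have := hnv o; positivity)
    (fun o => by show (1 + lam * nv o : ℝ) ≤ 1 + lam * nv k; have := hkmax o; nlinarith)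
    (fun o => by have := hnv o; positivity)
    (fun o => by ring)
    hmain m
end

section
/- Let n_1,…,n_c > 0, α > 0, λ > 0, and let u(t) ∈ ℝ^c evolve by the ODE du^{(o)}/dt = λ n_o u^{(o)}(t). Define p_o(t) = n_o e^{α u^{(o)}(t)} / Σ_k n_k e^{α u^{(k)}(t)} and the entropy H(t) = −Σ_o p_o(t) ln p_o(t). Then dH/dt = −λα·Cov(X,Y), where X takes value n_o u^{(o)}(t) and Y takes value ln p_o(t), each with probability p_o(t). -/
/-!
The unnormalised weights `w_o = n_o exp(α u_o)` have log-derivatives `g_o = λα n_o u_o`.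
Normalising weights with log-derivatives `g` gives `p_o' = p_o (g_o - E_p g)`, and the entropy
moves by `H' = -Σ p_o' (log p_o + 1)`; the constant `1` drops out because `Σ p_o' = 0`, leaving
`H' = -Σ p_o (g_o - E_p g) log p_o = -Cov_p(g, log p) = -λα Cov_p(X, log p)`.
-/

open Finset Real

namespace Softmax

variable {ι : Type*} [Fintype ι]

noncomputable def cov (p X Y : ι → ℝ) : ℝ :=
  ∑ o, X o * Y o * p o - (∑ o, X o * p o) * (∑ o, Y o * p o)

lemma cov_const_mul_left (p X Y : ι → ℝ) (κ : ℝ) :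
    cov p (fun o => κ * X o) Y = κ * cov p X Y := by
  simp only [cov, mul_assoc, ← mul_sum]
  ring

lemma hasDerivAt_neg_sum_mul_log {p : ι → ℝ → ℝ} {p' : ι → ℝ} {t : ℝ}
    (hp : ∀ o, HasDerivAt (p o) (p' o) t) (hp0 : ∀ o, p o t ≠ 0) :
    HasDerivAt (fun s => -∑ o, p o s * log (p o s))
      (-∑ o, p' o * (log (p o t) + 1)) t :=
  (HasDerivAt.fun_sum fun o _ => (hasDerivAt_mul_log (hp0 o)).comp t (hp o) |>.congr_deriv
    (mul_comm _ _)).fun_neg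

noncomputable def normalize (w : ι → ℝ) : ι → ℝ := fun o => w o / ∑ k, w k

lemma sum_normalize {w : ι → ℝ} (hw : ∑ k, w k ≠ 0) : ∑ o, normalize w o = 1 := by
  simp only [normalize, ← sum_div, div_self hw]

lemma normalize_pos {w : ι → ℝ} (hw : ∀ k, 0 < w k) (o : ι) : 0 < normalize w o :=
  div_pos (hw o) (sum_pos (fun k _ => hw k) ⟨o, mem_univ o⟩)

lemma hasDerivAt_normalize {w : ι → ℝ → ℝ} {g : ι → ℝ} {t : ℝ}
    (hw : ∀ k, HasDerivAt (w k) (g k * w k t) t) (hw0 : ∀ k, 0 < w k t) (o : ι) :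
    HasDerivAt (fun s => normalize (fun k => w k s) o)
      (normalize (fun k => w k t) o *
        (g o - ∑ k, g k * normalize (fun k => w k t) k)) t := by
  have hZ : HasDerivAt (fun s => ∑ k, w k s) (∑ k, g k * w k t) t :=
    HasDerivAt.fun_sum fun k _ => hw k
  have hZ0 : ∑ k, w k t ≠ 0 := (sum_pos (fun k _ => hw0 k) ⟨o, mem_univ o⟩).ne'
  refine ((hw o).fun_div hZ hZ0).congr_deriv ?_
  simp only [normalize, ← mul_div_assoc, ← sum_div]
  field_simp

lemma sum_mul_sub_mean_mul_add_one {q : ι → ℝ} (hq : ∑ o, q o = 1) (g Y : ι → ℝ) :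
    ∑ o, q o * (g o - ∑ k, g k * q k) * (Y o + 1) = cov q g Y := by
  set m := ∑ k, g k * q k
  have hexpand : ∀ o, q o * (g o - m) * (Y o + 1) =
      g o * Y o * q o - m * (Y o * q o) + (g o * q o - m * q o) := fun o => by ring
  simp only [hexpand, sum_add_distrib, sum_sub_distrib, ← mul_sum, hq, cov]
  ring

end Softmax

open Softmax in
theorem entropy_deriv_eq_neg_cov_general (c : ℕ) (nv : Fin c → ℝ) (α lam : ℝ)
    (hnv : ∀ o, 0 < nv o)
    (u : ℝ → Fin c → ℝ) (t : ℝ)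
    (hu : ∀ o s, HasDerivAt (fun r => u r o) (lam * nv o * u s o) s)
    (p : Fin c → ℝ → ℝ)
    (hp : ∀ o s, p o s =
      nv o * Real.exp (α * u s o) / ∑ k, nv k * Real.exp (α * u s k)) :
    HasDerivAt (fun s => -∑ o, p o s * Real.log (p o s))
      (-(lam * α) *
        ((∑ o, (nv o * u t o) * Real.log (p o t) * p o t) -
          (∑ o, (nv o * u t o) * p o t) * (∑ o, Real.log (p o t) * p o t))) t := by
  obtain _ | ⟨⟨o₀⟩⟩ := isEmpty_or_nonempty (Fin c)
  · simpa using hasDerivAt_const t (0 : ℝ)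
  set w : Fin c → ℝ → ℝ := fun o s => nv o * exp (α * u s o)
  have hw : ∀ o, HasDerivAt (w o) (lam * α * (nv o * u t o) * w o t) t := fun o =>
    (((hu o t).const_mul α).exp.const_mul (nv o)).congr_deriv (by ring)
  have hw0 : ∀ o, 0 < w o t := fun o => mul_pos (hnv o) (exp_pos _)
  have hpw : p = fun o s => normalize (fun k => w k s) o := funext₂ hp
  have hq : ∑ o, p o t = 1 := by
    rw [hpw]
    exact sum_normalize (sum_pos (fun k _ => hw0 k) ⟨o₀, mem_univ o₀⟩).ne'
  subst hpw
  convert hasDerivAt_neg_sum_mul_log (hasDerivAt_normalize hw hw0)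
    (fun o => (normalize_pos hw0 o).ne') using 1
  rw [sum_mul_sub_mean_mul_add_one hq, cov_const_mul_left, neg_mul]
  rfl

/-- Entropy decay formula: along the flow du⁽ᵒ⁾/dt = λ nₒ u⁽ᵒ⁾, the entropy of the
weighted softmax distribution pₒ satisfies dH/dt = −λα·Cov(X,Y), where X takes value
nₒ u⁽ᵒ⁾(t) and Y takes value ln pₒ(t), each with probability pₒ(t). -/
theorem entropy_deriv_eq_neg_cov (c : ℕ) (nv : Fin c → ℝ) (α lam : ℝ)
    (hnv : ∀ o, 0 < nv o) (hα : 0 < α) (hlam : 0 < lam)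
    (u : ℝ → Fin c → ℝ) (t : ℝ)
    (hu : ∀ o s, HasDerivAt (fun r => u r o) (lam * nv o * u s o) s)
    (p : Fin c → ℝ → ℝ)
    (hp : ∀ o s, p o s =
      nv o * Real.exp (α * u s o) / ∑ k, nv k * Real.exp (α * u s k)) :
    HasDerivAt (fun s => -∑ o, p o s * Real.log (p o s))
      (-(lam * α) *
        ((∑ o, (nv o * u t o) * Real.log (p o t) * p o t) -
          (∑ o, (nv o * u t o) * p o t) * (∑ o, Real.log (p o t) * p o t))) t :=
  entropy_deriv_eq_neg_cov_general c nv α lam hnv u t hu p hp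
end

section
/- Let Y ∈ ℝ^{c×c} and Z ∈ ℝ^{c×c} satisfy ‖Y‖_∞ + ‖Z‖_∞ < 1, and let S̃ ∈ ℝ^{n×n} be a row-stochastic matrix (nonnegative entries, rows summing to 1). Then the nc×nc matrix I_{nc} − (I_n ⊗ Y + S̃ ⊗ Z) is invertible, and consequently the fixed-point equation U = X + Y U + Z U S̃ᵀ has a unique solution U* = unvec((I_{nc} − (I_n ⊗ Y + S̃ ⊗ Z))^{-1} vec(X)) for any X ∈ ℝ^{c×n}. -/
open Matrix
open scoped Kronecker

/-- Maximum absolute row sum norm. -/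
noncomputable def infNorm {α β : Type*} [Fintype β] (A : Matrix α β ℝ) : ℝ :=
  ⨆ i, ∑ j, |A i j|

/-- A matrix with all absolute row sums `< 1` gives an invertible `1 - A`. -/
lemma isUnit_one_sub_of_rowsum_lt_one {m : Type*} [Fintype m] [DecidableEq m]
    (A : Matrix m m ℝ) (h : ∀ i, ∑ j, |A i j| < 1) :
    IsUnit ((1 : Matrix m m ℝ) - A) := by
  cases isEmpty_or_nonempty m with
  | inl he =>
    haveI : Subsingleton (Matrix m m ℝ) := ⟨fun a b => by ext i; exact he.elim i⟩
    exact isUnit_of_subsingleton _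
  | inr hne =>
  rw [← Matrix.mulVec_injective_iff_isUnit]
  intro x y hxy
  have hkey : ∀ v : m → ℝ, (1 - A).mulVec v = 0 → v = 0 := by
    intro v hv
    by_contra hne
    obtain ⟨i, hi⟩ : ∃ i, ∀ j, |v j| ≤ |v i| := by
      obtain ⟨i, -, hi⟩ := Finset.exists_max_image Finset.univ (fun j => |v j|)
        ⟨Classical.arbitrary m, Finset.mem_univ _⟩
      exact ⟨i, fun j => hi j (Finset.mem_univ _)⟩
    have hvi : 0 < |v i| := by
      rcases Function.ne_iff.1 hne with ⟨j, hj⟩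
      exact lt_of_lt_of_le (abs_pos.2 hj) (hi j)
    have hAv : v = A.mulVec v := by
      have := sub_eq_zero.2 (rfl : (1 : Matrix m m ℝ).mulVec v = (1 : Matrix m m ℝ).mulVec v)
      have h1 : (1 : Matrix m m ℝ).mulVec v - A.mulVec v = 0 := by
        rw [← Matrix.sub_mulVec]; exact hv
      have := sub_eq_zero.1 h1
      simpa [Matrix.one_mulVec] using this
    have : |v i| ≤ (∑ j, |A i j|) * |v i| := by
      calc |v i| = |(A.mulVec v) i| := by rw [← hAv]
        _ = |∑ j, A i j * v j| := rfl
        _ ≤ ∑ j, |A i j * v j| := Finset.abs_sum_le_sum_abs _ _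
        _ = ∑ j, |A i j| * |v j| := by simp [abs_mul]
        _ ≤ ∑ j, |A i j| * |v i| := by
            exact Finset.sum_le_sum fun j _ => mul_le_mul_of_nonneg_left (hi j) (abs_nonneg _)
        _ = (∑ j, |A i j|) * |v i| := by rw [Finset.sum_mul]
    have hlt : (∑ j, |A i j|) * |v i| < 1 * |v i| :=
      mul_lt_mul_of_pos_right (h i) hvi
    rw [one_mul] at hlt
    exact absurd (lt_of_le_of_lt this hlt) (lt_irrefl _)
  have := hkey (x - y) (by rw [Matrix.mulVec_sub, hxy, sub_self])
  exact sub_eq_zero.1 this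

/-- If ‖Y‖_∞ + ‖Z‖_∞ < 1 and S̃ is row-stochastic, then I − (I ⊗ Y + S̃ ⊗ Z) is
invertible, and U = X + Y U + Z U S̃ᵀ has the unique solution
U* = unvec((I − (I ⊗ Y + S̃ ⊗ Z))⁻¹ vec X). -/
theorem fixed_point_unique_solution (c n : ℕ)
    (Y Z : Matrix (Fin c) (Fin c) ℝ) (hYZ : infNorm Y + infNorm Z < 1)
    (S : Matrix (Fin n) (Fin n) ℝ)
    (hS : ∀ i j, 0 ≤ S i j) (hrow : ∀ i, ∑ j, S i j = 1) :
    IsUnit ((1 : Matrix (Fin n × Fin c) (Fin n × Fin c) ℝ)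
        - ((1 : Matrix (Fin n) (Fin n) ℝ) ⊗ₖ Y + S ⊗ₖ Z)) ∧
      ∀ X U : Matrix (Fin c) (Fin n) ℝ,
        (U = X + Y * U + Z * U * Sᵀ ↔
          (fun p : Fin n × Fin c => U p.2 p.1) =
            ((1 : Matrix (Fin n × Fin c) (Fin n × Fin c) ℝ)
                - ((1 : Matrix (Fin n) (Fin n) ℝ) ⊗ₖ Y + S ⊗ₖ Z))⁻¹.mulVec
              (fun p : Fin n × Fin c => X p.2 p.1)) := by
  set M : Matrix (Fin n × Fin c) (Fin n × Fin c) ℝ :=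
    (1 : Matrix (Fin n) (Fin n) ℝ) ⊗ₖ Y + S ⊗ₖ Z with hM
  -- row-sum bound for M
  have hrowM : ∀ p : Fin n × Fin c, ∑ q, |M p q| < 1 := by
    rintro ⟨i, a⟩
    have hYa : ∑ b, |Y a b| ≤ infNorm Y :=
      le_ciSup (f := fun i => ∑ j, |Y i j|) (Set.Finite.bddAbove (Set.finite_range _)) a
    have hZa : ∑ b, |Z a b| ≤ infNorm Z :=
      le_ciSup (f := fun i => ∑ j, |Z i j|) (Set.Finite.bddAbove (Set.finite_range _)) a
    have hsum : ∑ q : Fin n × Fin c, |M (i, a) q|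
        ≤ (∑ b, |Y a b|) + (∑ b, |Z a b|) := by
      rw [Fintype.sum_prod_type]
      have step : ∀ j ∈ Finset.univ, ∑ b, |M (i, a) (j, b)|
          ≤ (if j = i then ∑ b, |Y a b| else 0) + S i j * ∑ b, |Z a b| := by
        intro j _
        have : ∀ b, |M (i, a) (j, b)| ≤
            (if j = i then |Y a b| else 0) + S i j * |Z a b| := by
          intro b
          simp only [hM, Matrix.add_apply, Matrix.kroneckerMap_apply, Matrix.one_apply]
          rcases eq_or_ne j i with hji | hji
          · subst hji
            simp only [eq_self_iff_true, if_true, one_mul]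
            calc |Y a b + S j j * Z a b| ≤ |Y a b| + |S j j * Z a b| := abs_add_le _ _
              _ = |Y a b| + S j j * |Z a b| := by
                  rw [abs_mul, abs_of_nonneg (hS j j)]
          · simp only [if_neg (Ne.symm hji), if_neg hji, zero_mul, zero_add]
            rw [abs_mul, abs_of_nonneg (hS i j)]
        calc ∑ b, |M (i, a) (j, b)|
            ≤ ∑ b, ((if j = i then |Y a b| else 0) + S i j * |Z a b|) :=
              Finset.sum_le_sum fun b _ => this b
          _ = (if j = i then ∑ b, |Y a b| else 0) + S i j * ∑ b, |Z a b| := by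
              rw [Finset.sum_add_distrib, Finset.mul_sum]
              congr 1
              split <;> simp
      calc ∑ j, ∑ b, |M (i, a) (j, b)|
          ≤ ∑ j, ((if j = i then ∑ b, |Y a b| else 0) + S i j * ∑ b, |Z a b|) :=
            Finset.sum_le_sum step
        _ = (∑ b, |Y a b|) + (∑ b, |Z a b|) := by
            rw [Finset.sum_add_distrib, Finset.sum_ite_eq' Finset.univ i]
            simp [← Finset.sum_mul, hrow i]
    calc ∑ q : Fin n × Fin c, |M (i, a) q|
        ≤ (∑ b, |Y a b|) + (∑ b, |Z a b|) := hsum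
      _ ≤ infNorm Y + infNorm Z := add_le_add hYa hZa
      _ < 1 := hYZ
  have hunit : IsUnit ((1 : Matrix (Fin n × Fin c) (Fin n × Fin c) ℝ) - M) :=
    isUnit_one_sub_of_rowsum_lt_one M hrowM
  refine ⟨hunit, fun X U => ?_⟩
  set A := (1 : Matrix (Fin n × Fin c) (Fin n × Fin c) ℝ) - M with hA
  set vU : Fin n × Fin c → ℝ := fun p => U p.2 p.1 with hvU
  set vX : Fin n × Fin c → ℝ := fun p => X p.2 p.1 with hvX
  have hdet : IsUnit A.det := (Matrix.isUnit_iff_isUnit_det A).1 hunit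
  -- the key vectorization identity
  have hvec : ∀ p : Fin n × Fin c, (A.mulVec vU) p
      = U p.2 p.1 - ((Y * U) p.2 p.1 + (Z * U * Sᵀ) p.2 p.1) := by
    rintro ⟨i, a⟩
    have : (A.mulVec vU) (i, a)
        = ∑ j, ∑ b, ((if (i, a) = (j, b) then (1:ℝ) else 0)
            - ((if i = j then (1:ℝ) else 0) * Y a b + S i j * Z a b)) * U b j := by
      simp only [Matrix.mulVec, dotProduct, Fintype.sum_prod_type, hA, hM,
        Matrix.sub_apply, Matrix.add_apply, Matrix.kroneckerMap_apply,
        Matrix.one_apply, hvU]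
    rw [this]
    have hMul : (Y * U) a i = ∑ b, Y a b * U b i := rfl
    have hMul2 : (Z * U * Sᵀ) a i = ∑ j, ∑ b, S i j * Z a b * U b j := by
      simp only [Matrix.mul_apply, Matrix.transpose_apply, Finset.sum_mul]
      exact Finset.sum_congr rfl fun j _ => Finset.sum_congr rfl fun b _ => by ring
    simp only [sub_mul, add_mul, Finset.sum_sub_distrib, Finset.sum_add_distrib]
    have h1 : ∑ j, ∑ b, (if (i, a) = (j, b) then (1:ℝ) else 0) * U b j = U a i := by
      simp [Prod.ext_iff, ite_and, Finset.sum_ite_eq, Finset.sum_ite_eq']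
    have h2 : ∑ j, ∑ b, (if i = j then (1:ℝ) else 0) * Y a b * U b j
        = (Y * U) a i := by
      rw [hMul]
      rw [Finset.sum_comm]
      refine Finset.sum_congr rfl fun b _ => ?_
      simp [Finset.mul_sum, mul_ite, Finset.sum_ite_eq, Finset.sum_ite_eq']
    have h3 : ∑ j, ∑ b, S i j * Z a b * U b j = (Z * U * Sᵀ) a i := hMul2.symm
    rw [h1, h2, h3]
  constructor
  · intro hU
    have hAx : A.mulVec vU = vX := by
      funext p
      rw [hvec p]
      have := congrFun (congrFun hU p.2) p.1
      simp only [Matrix.add_apply] at this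
      rw [hvX]
      simp only []
      linarith [this]
    rw [← hAx, Matrix.mulVec_mulVec, Matrix.nonsing_inv_mul A hdet, Matrix.one_mulVec]
  · intro hU
    have hAx : A.mulVec vU = vX := by
      rw [hU, Matrix.mulVec_mulVec, Matrix.mul_nonsing_inv A hdet, Matrix.one_mulVec]
    funext a i
    have := congrFun hAx (i, a)
    rw [hvec (i, a)] at this
    simp only [hvX] at this
    simp only [Matrix.add_apply]
    linarith [this]
end
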